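/- arXiv:0804.0581 — 9 statements merged into one kernel-verified Lean document; each statement's English description precedes it below -/
import Mathlib

section
/- Let f_1,…,f_k : ℝ^n → ℝ be continuously differentiable and let x ∈ ℝ^n. Let α̂ ∈ ℝ^k be a minimizer of α ↦ ‖∑_{i=1}^k α_i ∇f_i(x)‖₂² over the standard simplex {α ∈ ℝ^k : α_i ≥ 0 for all i, ∑_{i=1}^k α_i = 1}, and set q(x) = ∑_{i=1}^k α̂_i ∇f_i(x). Then ⟨∇f_i(x), q(x)⟩ ≥ ‖q(x)‖₂² for every i = 1,…,k; in particular, if q(x) ≠ 0 then ⟨∇f_i(x), −q(x)⟩ < 0 for all i, i.e. −q(x) is a descent direction for all objective functions f_1,…,f_k simultaneously at x. -/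
/-!
A norm-minimal point `q` of a convex set `K` is the projection of the origin onto `K`, so the
variational inequality `⟪0 - q, w - q⟫ ≤ 0` holds for all `w ∈ K`, i.e. `‖q‖² ≤ ⟪w, q⟫`.
Applied to the convex hull of the gradients, parametrised by the standard simplex, this gives the
bound for every gradient `∇fᵢ(x)`; if `q ≠ 0`, then `⟪∇fᵢ(x), -q⟫ ≤ -‖q‖² < 0`.
-/

open scoped InnerProductSpace

theorem norm_sq_le_inner_of_isMinOn_norm {E : Type*} [NormedAddCommGroup E]
    [InnerProductSpace ℝ E] {K : Set E} (hK : Convex ℝ K) {q : E} (hq : q ∈ K)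
    (hmin : IsMinOn (‖·‖) K q) {w : E} (hw : w ∈ K) : ‖q‖ ^ 2 ≤ ⟪w, q⟫_ℝ := by
  have : Nonempty K := ⟨⟨q, hq⟩⟩
  have hinf : ‖0 - q‖ = ⨅ v : K, ‖0 - (v : E)‖ := by
    refine le_antisymm (le_ciInf fun v => ?_) (ciInf_le ⟨0, ?_⟩ (⟨q, hq⟩ : K))
    · simpa using isMinOn_iff.mp hmin v v.2
    · rintro _ ⟨v, rfl⟩
      exact norm_nonneg _
  have := (norm_eq_iInf_iff_real_inner_le_zero hK hq).mp hinf w hw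
  rw [zero_sub, inner_neg_left, inner_sub_right, real_inner_self_eq_norm_sq,
    real_inner_comm] at this
  linarith

theorem stmt_0_general {n k : ℕ} (f : Fin k → EuclideanSpace ℝ (Fin n) → ℝ)
    (x : EuclideanSpace ℝ (Fin n))
    (αh : Fin k → ℝ) (hmem : αh ∈ stdSimplex ℝ (Fin k))
    (hmin : ∀ α ∈ stdSimplex ℝ (Fin k),
      ‖∑ i, αh i • gradient (f i) x‖ ^ 2 ≤ ‖∑ i, α i • gradient (f i) x‖ ^ 2)
    (q : EuclideanSpace ℝ (Fin n)) (hq : q = ∑ i, αh i • gradient (f i) x) :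
    (∀ i, ‖q‖ ^ 2 ≤ (inner ℝ (gradient (f i) x) q : ℝ)) ∧
      (q ≠ 0 → ∀ i, (inner ℝ (gradient (f i) x) (-q) : ℝ) < 0) := by
  set L := Fintype.linearCombination ℝ fun i => gradient (f i) x
  have hL (α : Fin k → ℝ) : L α = ∑ i, α i • gradient (f i) x :=
    Fintype.linearCombination_apply _ _ _
  have hq_mem : q ∈ L '' stdSimplex ℝ (Fin k) := ⟨αh, hmem, by rw [hL, hq]⟩
  have hq_min : IsMinOn (‖·‖) (L '' stdSimplex ℝ (Fin k)) q := by
    rintro _ ⟨α, hα, rfl⟩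
    rw [hq, hL]
    exact (pow_le_pow_iff_left₀ (norm_nonneg _) (norm_nonneg _) two_ne_zero).mp (hmin α hα)
  have hbound (i : Fin k) : ‖q‖ ^ 2 ≤ ⟪gradient (f i) x, q⟫_ℝ :=
    norm_sq_le_inner_of_isMinOn_norm ((convex_stdSimplex ℝ _).linear_image L) hq_mem hq_min
      ⟨Pi.single i 1, single_mem_stdSimplex ℝ i, by simp [hL, Pi.single_apply]⟩
  refine ⟨hbound, fun hq0 i => ?_⟩
  have := hbound i
  have := pow_pos (norm_pos_iff.mpr hq0) 2
  rw [inner_neg_right]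
  linarith

/-- If `α̂` minimizes `‖∑ αᵢ ∇fᵢ(x)‖²` over the standard simplex and
`q = ∑ α̂ᵢ ∇fᵢ(x)`, then `⟨∇fᵢ(x), q⟩ ≥ ‖q‖²` for every `i`; in particular,
if `q ≠ 0` then `-q` is a descent direction for all `fᵢ` at `x`. -/
theorem stmt_0 {n k : ℕ} (f : Fin k → EuclideanSpace ℝ (Fin n) → ℝ)
    (hf : ∀ i, ContDiff ℝ 1 (f i)) (x : EuclideanSpace ℝ (Fin n))
    (αh : Fin k → ℝ) (hmem : αh ∈ stdSimplex ℝ (Fin k))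
    (hmin : ∀ α ∈ stdSimplex ℝ (Fin k),
      ‖∑ i, αh i • gradient (f i) x‖ ^ 2 ≤ ‖∑ i, α i • gradient (f i) x‖ ^ 2)
    (q : EuclideanSpace ℝ (Fin n)) (hq : q = ∑ i, αh i • gradient (f i) x) :
    (∀ i, ‖q‖ ^ 2 ≤ (inner ℝ (gradient (f i) x) q : ℝ)) ∧
      (q ≠ 0 → ∀ i, (inner ℝ (gradient (f i) x) (-q) : ℝ) < 0) :=
  stmt_0_general f x αh hmem hmin q hq
end

section
/- Let Q ⊆ ℝ^n, let F = (f_1,…,f_k) : ℝ^n → ℝ^k be continuous, and let ε ∈ ℝ^k with ε_i > 0 for all i. If x₀ ∈ Q is a Pareto point of F on Q, then there exists δ > 0 such that for every u in the open ball B_δ(x₀) ∩ Q there is no y ∈ Q with y ≺_{−ε} u; consequently B_δ(x₀) ∩ Q ⊆ P_{Q,ε}. -/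
/-- If `x₀ ∈ Q` is a Pareto point of a continuous `F` on `Q` and `ε` has positive
entries, then some open ball around `x₀` intersected with `Q` consists only of
points that are not `-ε`-dominated by any point of `Q`, i.e. it is contained in
`P_{Q,ε}`. -/
theorem stmt_1 {n k : ℕ} (Q : Set (EuclideanSpace ℝ (Fin n)))
    (F : EuclideanSpace ℝ (Fin n) → Fin k → ℝ) (hF : Continuous F)
    (ε : Fin k → ℝ) (hε : ∀ i, 0 < ε i)
    (x₀ : EuclideanSpace ℝ (Fin n)) (hx₀ : x₀ ∈ Q)
    (hpareto : ¬ ∃ y ∈ Q, (∀ i, F y i ≤ F x₀ i) ∧ F y ≠ F x₀) :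
    ∃ δ > (0 : ℝ), ∀ u ∈ Metric.ball x₀ δ ∩ Q,
      ¬ ∃ y ∈ Q, (∀ i, F y i + ε i ≤ F u i) ∧ (fun i => F y i + ε i) ≠ F u := by
  rcases Nat.eq_zero_or_pos k with hk | hk
  · refine ⟨1, one_pos, ?_⟩
    rintro u _ ⟨y, _, _, hne⟩
    exact hne (funext fun i => absurd i.2 (by omega))
  · have hne : (Finset.univ : Finset (Fin k)).Nonempty := by
      simpa [Finset.univ_nonempty_iff] using Fin.pos_iff_nonempty.mp hk
    obtain ⟨i₀, _, hmin⟩ := Finset.exists_min_image Finset.univ ε hne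
    have hε₀ : 0 < ε i₀ := hε i₀
    obtain ⟨δ, hδ, hball⟩ := Metric.continuous_iff.mp hF x₀ (ε i₀) hε₀
    refine ⟨δ, hδ, ?_⟩
    rintro u ⟨hu, -⟩ ⟨y, hyQ, hdom, -⟩
    have hd := hball u hu
    apply hpareto
    refine ⟨y, hyQ, fun i => ?_, fun h => ?_⟩
    · have h1 : |F u i - F x₀ i| ≤ dist (F u) (F x₀) := by
        have := dist_le_pi_dist (F u) (F x₀) i
        simpa [Real.dist_eq] using this
      have h2 : F u i - F x₀ i < ε i := lt_of_le_of_lt (le_trans (le_abs_self _) h1) (lt_of_lt_of_le hd (hmin i (Finset.mem_univ i)))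
      linarith [hdom i]
    · have h2 : F u i₀ - F x₀ i₀ < ε i₀ := by
        have h1 : |F u i₀ - F x₀ i₀| ≤ dist (F u) (F x₀) := by
          have := dist_le_pi_dist (F u) (F x₀) i₀
          simpa [Real.dist_eq] using this
        exact lt_of_le_of_lt (le_trans (le_abs_self _) h1) hd
      have := hdom i₀
      have := congrFun h i₀
      linarith
end

section
/- Let Q ⊆ ℝ^n be a nonempty compact set, F : ℝ^n → ℝ^k continuous, ε ∈ ℝ^k with ε_i > 0 for all i, and Δ > 0. If x ∈ Q and there exists y ∈ Q with y ≺_{−(ε+2·1Δ)} x, then there exists p ∈ P_{Q,ε} with p ≺_{−(ε+2·1Δ)} x; in particular, every point of Q \ P_{Q,ε+2·1Δ} is −(ε+2Δ)-dominated by a point of P_{Q,ε}. -/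
/-- If `x ∈ Q` is `-(ε+2Δ)`-dominated by some `y ∈ Q`, then it is already
`-(ε+2Δ)`-dominated by some point `p ∈ P_{Q,ε}`. -/
theorem stmt_5 {n k : ℕ} (Q : Set (EuclideanSpace ℝ (Fin n)))
    (hQ : Q.Nonempty) (hQc : IsCompact Q)
    (F : EuclideanSpace ℝ (Fin n) → Fin k → ℝ) (hF : Continuous F)
    (ε : Fin k → ℝ) (hε : ∀ i, 0 < ε i) (Δ : ℝ) (hΔ : 0 < Δ)
    (x : EuclideanSpace ℝ (Fin n)) (hx : x ∈ Q)
    (y : EuclideanSpace ℝ (Fin n)) (hy : y ∈ Q)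
    (hdom : (∀ i, F y i + (ε i + 2 * Δ) ≤ F x i) ∧
      (fun i => F y i + (ε i + 2 * Δ)) ≠ F x) :
    ∃ p ∈ Q,
      (¬ ∃ z ∈ Q, (∀ i, F z i + ε i ≤ F p i) ∧ (fun i => F z i + ε i) ≠ F p) ∧
      (∀ i, F p i + (ε i + 2 * Δ) ≤ F x i) ∧
      (fun i => F p i + (ε i + 2 * Δ)) ≠ F x := by
  obtain ⟨hle, hne⟩ := hdom
  -- `Fin k` is nonempty, since the two functions differ somewhere
  obtain ⟨i₀, -⟩ := Function.ne_iff.mp hne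
  -- continuity of coordinates
  have hFi : ∀ i : Fin k, Continuous fun z => F z i := fun i =>
    (continuous_apply i).comp hF
  -- the compact set Q' = {z ∈ Q | ∀ i, F z i ≤ F y i}
  set Q' : Set (EuclideanSpace ℝ (Fin n)) :=
    {z ∈ Q | ∀ i, F z i ≤ F y i} with hQ'def
  have hQ'c : IsCompact Q' := by
    have hclosed : IsClosed {z : EuclideanSpace ℝ (Fin n) | ∀ i, F z i ≤ F y i} := by
      have : {z : EuclideanSpace ℝ (Fin n) | ∀ i, F z i ≤ F y i} =
          ⋂ i, {z | F z i ≤ F y i} := by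
        ext z; simp
      rw [this]
      exact isClosed_iInter fun i => isClosed_le (hFi i) continuous_const
    exact hQc.inter_right hclosed
  have hyQ' : y ∈ Q' := ⟨hy, fun i => le_refl _⟩
  -- minimize the sum of the objectives over Q'
  have hcont : Continuous fun z => ∑ i, F z i := continuous_finset_sum _ fun i _ => hFi i
  obtain ⟨p, hpQ', hpmin⟩ := hQ'c.exists_isMinOn ⟨y, hyQ'⟩ hcont.continuousOn
  obtain ⟨hpQ, hpley⟩ := hpQ'
  have hεsum : 0 < ∑ i, ε i :=
    Finset.sum_pos (fun i _ => hε i) ⟨i₀, Finset.mem_univ i₀⟩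
  refine ⟨p, hpQ, ?_, ?_, ?_⟩
  · rintro ⟨z, hzQ, hzle, -⟩
    have hzQ' : z ∈ Q' := by
      refine ⟨hzQ, fun i => ?_⟩
      have := hzle i
      have := hε i
      have := hpley i
      linarith
    have hmin := hpmin hzQ'
    have hsum : ∑ i, F z i + ∑ i, ε i ≤ ∑ i, F p i := by
      rw [← Finset.sum_add_distrib]
      exact Finset.sum_le_sum fun i _ => hzle i
    simp only [isMinOn_iff] at hpmin
    have := hpmin z hzQ'
    linarith
  · intro i
    have := hpley i
    have := hle i
    linarith
  · intro heq
    apply hne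
    funext i
    have h1 : F p i + (ε i + 2 * Δ) = F x i := congrFun heq i
    have h2 := hpley i
    have h3 := hle i
    linarith
end

section
/- Let Q ⊆ ℝ^n, F : ℝ^n → ℝ^k, ε ∈ ℝ^k with ε_i > 0 for all i, and Δ > 0. If p ∈ P_{Q,ε} and a ∈ Q satisfy ‖F(p) − F(a)‖_∞ ≤ Δ, then a ∈ P_{Q,ε+1Δ}. -/
/-- If `p ∈ P_{Q,ε}` and `a ∈ Q` with `‖F p - F a‖_∞ ≤ Δ`, then
`a ∈ P_{Q,ε+1Δ}`. -/
theorem stmt_6 {n k : ℕ} (Q : Set (EuclideanSpace ℝ (Fin n)))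
    (F : EuclideanSpace ℝ (Fin n) → Fin k → ℝ)
    (ε : Fin k → ℝ) (hε : ∀ i, 0 < ε i) (Δ : ℝ) (hΔ : 0 < Δ)
    (p a : EuclideanSpace ℝ (Fin n)) (hp : p ∈ Q) (ha : a ∈ Q)
    (hpP : ¬ ∃ y ∈ Q, (∀ i, F y i + ε i ≤ F p i) ∧ (fun i => F y i + ε i) ≠ F p)
    (hdist : ‖F p - F a‖ ≤ Δ) :
    ¬ ∃ y ∈ Q, (∀ i, F y i + (ε i + Δ) ≤ F a i) ∧
      (fun i => F y i + (ε i + Δ)) ≠ F a := by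
  rintro ⟨y, hyQ, hle, hne⟩
  have key : ∀ i, F y i + ε i ≤ F p i := by
    intro i
    have h1 : |F p i - F a i| ≤ Δ := by
      calc |F p i - F a i| = ‖(F p - F a) i‖ := by simp [Real.norm_eq_abs]
        _ ≤ ‖F p - F a‖ := norm_le_pi_norm _ i
        _ ≤ Δ := hdist
    have h2 := abs_le.mp h1
    have := hle i
    linarith [h2.2]
  apply hpP
  refine ⟨y, hyQ, key, ?_⟩
  intro hcontra
  apply hne
  funext i
  have h1 : |F p i - F a i| ≤ Δ := by
    calc |F p i - F a i| = ‖(F p - F a) i‖ := by simp [Real.norm_eq_abs]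
      _ ≤ ‖F p - F a‖ := norm_le_pi_norm _ i
      _ ≤ Δ := hdist
  have h2 := abs_le.mp h1
  have h3 : F y i + ε i = F p i := congrFun hcontra i
  have := hle i
  linarith [h2.1]
end

section
/- Let K := [m_1,M_1] × … × [m_{k-1},M_{k-1}] ⊂ ℝ^{k-1} with m_j ≤ M_j, and let f : K → [m_k, M_k] be continuously differentiable with ∂f/∂u_i (u) ≤ 0 for all u ∈ K and all i = 1,…,k−1. Then the (k−1)-dimensional area of the graph of f satisfies ∫_K √(‖∇f(u)‖₂² + 1) du ≤ ∑_{i=1}^k ∏_{j=1, j≠i}^k (M_j − m_j). -/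
/-! Since every partial derivative of `f` is nonpositive, `√(‖∇f‖² + 1) ≤ 1 - ∑ᵢ ∂ᵢf`.
Integrating over `K`, the constant term contributes the volume `∏_{j<k} (M_j - m_j)` of `K`.
By the divergence theorem for the field `f eᵢ`, `∫_K -∂ᵢf` is the integral over the `i`-th face
of `K` of the drop of `f` across the box, which is at most `M_k - m_k`; so it contributes at most
`(M_k - m_k) ∏_{j≠i,k} (M_j - m_j)`. -/

open MeasureTheory Set Finset

theorem Real.sqrt_sum_sq_add_one_le {ι : Type*} [Fintype ι] (p : ι → ℝ) :
    √(∑ i, p i ^ 2 + 1) ≤ ∑ i, |p i| + 1 := by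
  have hnn : 0 ≤ ∑ i, |p i| := sum_nonneg fun i _ => abs_nonneg _
  have hsq : ∑ i, p i ^ 2 ≤ (∑ i, |p i|) ^ 2 := by
    simpa only [sq_abs] using sum_sq_le_sq_sum_of_nonneg fun i _ => abs_nonneg (p i)
  exact Real.sqrt_le_iff.2 ⟨by positivity, by nlinarith⟩

theorem Fin.prod_univ_erase_eq_prod_succAbove {M : Type*} [CommMonoid M] {n : ℕ}
    (f : Fin (n + 1) → M) (i : Fin (n + 1)) :
    ∏ j ∈ univ.erase i, f j = ∏ j : Fin n, f (i.succAbove j) := by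
  rw [Fin.univ_succAbove n i, erase_cons, prod_map, coe_succAboveEmb]

theorem Fin.sum_prod_univ_erase_castSucc {R : Type*} [CommSemiring R] {d : ℕ}
    (w : Fin (d + 1) → R) :
    ∑ i, ∏ j ∈ univ.erase i, w j =
      ∏ j : Fin d, w j.castSucc + w (last d) * ∑ i : Fin d, ∏ j ∈ univ.erase i, w j.castSucc := by
  simp only [← filter_ne', prod_filter, Fin.prod_univ_castSucc, Fin.sum_univ_castSucc, mul_sum]
  simp [Fin.castSucc_ne_last, Fin.castSucc_inj, add_comm, mul_comm, (Fin.castSucc_lt_last _).ne']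

theorem integral_fderiv_apply_single_eq_sub {n : ℕ} {a b : Fin (n + 1) → ℝ} (hab : a ≤ b)
    {g : (Fin (n + 1) → ℝ) → ℝ} (hg : ContDiff ℝ 1 g) (i : Fin (n + 1)) :
    ∫ x in Icc a b, fderiv ℝ g x (Pi.single i 1) =
      (∫ x in Icc (a ∘ i.succAbove) (b ∘ i.succAbove), g (i.insertNth (b i) x)) -
        ∫ x in Icc (a ∘ i.succAbove) (b ∘ i.succAbove), g (i.insertNth (a i) x) := by
  have hsum (x) : ∑ j, (if j = i then fderiv ℝ g x else 0) (Pi.single j 1) =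
      fderiv ℝ g x (Pi.single i 1) := by
    rw [sum_eq_single i] <;> simp +contextual
  have hcont : Continuous fun x => fderiv ℝ g x (Pi.single i 1) :=
    (hg.continuous_fderiv one_ne_zero).clm_apply continuous_const
  have hdiv := integral_divergence_of_hasFDerivAt_off_countable' a b hab
    (fun j x => if j = i then g x else 0) (fun j x => if j = i then fderiv ℝ g x else 0)
    ∅ countable_empty
    (fun j => by split_ifs; exacts [hg.continuous.continuousOn, continuousOn_const])
    (fun x _ j => by
      split_ifs
      · exact (hg.differentiable one_ne_zero x).hasFDerivAt
      · exact hasFDerivAt_const 0 x)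
    (by simpa only [hsum] using hcont.continuousOn.integrableOn_compact isCompact_Icc)
  simp only [hsum] at hdiv
  rw [hdiv, sum_eq_single i] <;> simp +contextual

theorem integral_neg_fderiv_apply_single_le {d : ℕ} {a b : Fin d → ℝ} (hab : a ≤ b)
    {g : (Fin d → ℝ) → ℝ} (hg : ContDiff ℝ 1 g) {c C : ℝ} (hgc : MapsTo g (Icc a b) (Icc c C))
    (i : Fin d) :
    ∫ x in Icc a b, -fderiv ℝ g x (Pi.single i 1) ≤ (C - c) * ∏ j ∈ univ.erase i, (b j - a j) := by
  obtain ⟨n, rfl⟩ : ∃ n, d = n + 1 := Nat.exists_eq_add_one.2 i.pos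
  have hvol_face : volume.real (Icc (a ∘ i.succAbove) (b ∘ i.succAbove)) =
      ∏ j ∈ univ.erase i, (b j - a j) := by
    rw [measureReal_def, Real.volume_Icc_pi_toReal (a := a ∘ i.succAbove) (b := b ∘ i.succAbove)
      fun j => hab _, Fin.prod_univ_erase_eq_prod_succAbove]
    rfl
  have hface (t : ℝ) : IntegrableOn (fun x => g (i.insertNth t x))
      (Icc (a ∘ i.succAbove) (b ∘ i.succAbove)) :=
    (hg.continuous.comp (continuous_const.finInsertNth i continuous_id)).continuousOn
      |>.integrableOn_compact isCompact_Icc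
  have hgap : ∀ x ∈ Icc (a ∘ i.succAbove) (b ∘ i.succAbove),
      c - C ≤ g (i.insertNth (b i) x) - g (i.insertNth (a i) x) := fun x hx =>
    have hfront := hgc (Fin.insertNth_mem_Icc.2 ⟨⟨hab i, le_rfl⟩, hx⟩)
    have hback := hgc (Fin.insertNth_mem_Icc.2 ⟨⟨le_rfl, hab i⟩, hx⟩)
    by linarith [hfront.1, hback.2]
  have hint_gap := setIntegral_ge_of_const_le_real measurableSet_Icc
    isCompact_Icc.measure_lt_top.ne hgap ((hface _).sub (hface _))
  rw [hvol_face] at hint_gap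
  rw [integral_neg, integral_fderiv_apply_single_eq_sub hab hg i,
    ← integral_sub (hface _) (hface _)]
  linarith

theorem integral_sqrt_sum_sq_fderiv_add_one_le {d : ℕ} {a b : Fin d → ℝ} (hab : a ≤ b)
    {g : (Fin d → ℝ) → ℝ} (hg : ContDiff ℝ 1 g) {c C : ℝ} (hgc : MapsTo g (Icc a b) (Icc c C))
    (hmono : ∀ x ∈ Icc a b, ∀ i, fderiv ℝ g x (Pi.single i 1) ≤ 0) :
    ∫ x in Icc a b, √(∑ i, fderiv ℝ g x (Pi.single i 1) ^ 2 + 1) ≤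
      ∏ j, (b j - a j) + (C - c) * ∑ i, ∏ j ∈ univ.erase i, (b j - a j) := by
  have hpartial (i : Fin d) : Continuous fun x => fderiv ℝ g x (Pi.single i 1) :=
    (hg.continuous_fderiv one_ne_zero).clm_apply continuous_const
  have hint (i : Fin d) : IntegrableOn (fun x => -fderiv ℝ g x (Pi.single i 1)) (Icc a b) :=
    (hpartial i).neg.continuousOn.integrableOn_compact isCompact_Icc
  have hsqrt : ∀ x ∈ Icc a b, √(∑ i, fderiv ℝ g x (Pi.single i 1) ^ 2 + 1) ≤
      ∑ i, -fderiv ℝ g x (Pi.single i 1) + 1 := fun x hx => by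
    simpa only [abs_of_nonpos (hmono x hx _)] using
      Real.sqrt_sum_sq_add_one_le fun i => fderiv ℝ g x (Pi.single i 1)
  have hint_sum : IntegrableOn (fun x => ∑ i, -fderiv ℝ g x (Pi.single i 1) + 1) (Icc a b) :=
    (integrable_finsetSum _ fun i _ => hint i).add
      (integrableOn_const isCompact_Icc.measure_lt_top.ne)
  calc ∫ x in Icc a b, √(∑ i, fderiv ℝ g x (Pi.single i 1) ^ 2 + 1)
      ≤ ∫ x in Icc a b, (∑ i, -fderiv ℝ g x (Pi.single i 1) + 1) :=
        setIntegral_mono_on ((Continuous.continuousOn (by fun_prop)).integrableOn_compact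
          isCompact_Icc) hint_sum measurableSet_Icc hsqrt
    _ = (∑ i, ∫ x in Icc a b, -fderiv ℝ g x (Pi.single i 1)) + volume.real (Icc a b) := by
        rw [integral_add (integrable_finsetSum _ fun i _ => hint i)
          (integrableOn_const isCompact_Icc.measure_lt_top.ne),
          integral_finsetSum _ fun i _ => hint i, setIntegral_const, smul_eq_mul, mul_one]
    _ ≤ ∑ i, (C - c) * ∏ j ∈ univ.erase i, (b j - a j) + ∏ j, (b j - a j) :=
        add_le_add (sum_le_sum fun i _ => integral_neg_fderiv_apply_single_le hab hg hgc i)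
          (Real.volume_Icc_pi_toReal hab).le
    _ = ∏ j, (b j - a j) + (C - c) * ∑ i, ∏ j ∈ univ.erase i, (b j - a j) := by
        rw [mul_sum, add_comm]

theorem EuclideanSpace.setIntegral_preimage_ofLp {ι E : Type*} [Fintype ι]
    [NormedAddCommGroup E] [NormedSpace ℝ E] (s : Set (ι → ℝ)) (h : EuclideanSpace ℝ ι → E) :
    ∫ u in WithLp.ofLp ⁻¹' s, h u = ∫ y in s, h (WithLp.toLp 2 y) :=
  (PiLp.volume_preserving_ofLp ι).setIntegral_preimage_emb
    (MeasurableEquiv.toLp 2 (ι → ℝ)).symm.measurableEmbedding (fun y => h (WithLp.toLp 2 y)) s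

theorem EuclideanSpace.gradient_apply {ι : Type*} [Fintype ι] [DecidableEq ι]
    (f : EuclideanSpace ℝ ι → ℝ) (u : EuclideanSpace ℝ ι) (i : ι) :
    gradient f u i = fderiv ℝ f u (EuclideanSpace.single i 1) := by
  rw [← InnerProductSpace.toDual_symm_apply, EuclideanSpace.inner_single_right]
  simp [gradient]

theorem EuclideanSpace.fderiv_comp_toLp_apply_single {ι : Type*} [Fintype ι] [DecidableEq ι]
    (f : EuclideanSpace ℝ ι → ℝ) (y : ι → ℝ) (i : ι) :
    fderiv ℝ (f ∘ WithLp.toLp 2) y (Pi.single i 1) =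
      fderiv ℝ f (WithLp.toLp 2 y) (EuclideanSpace.single i 1) := by
  rw [← PiLp.coe_symm_continuousLinearEquiv 2 ℝ, ContinuousLinearEquiv.comp_right_fderiv]
  rfl

/-- Bound on the `(k-1)`-dimensional area of the graph of a coordinatewise
nonincreasing `C¹` function `f : K → [m_k, M_k]` over the box
`K = ∏_{j<k-1} [m_j, M_j]` (here `k = d+1`):
`∫_K √(‖∇f‖² + 1) ≤ ∑_{i=1}^k ∏_{j≠i} (M_j - m_j)`. -/
theorem stmt_11 {d : ℕ} (m M : Fin (d + 1) → ℝ) (hmM : ∀ j, m j ≤ M j)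
    (f : EuclideanSpace ℝ (Fin d) → ℝ) (hf : ContDiff ℝ 1 f)
    (K : Set (EuclideanSpace ℝ (Fin d)))
    (hK : K = (WithLp.ofLp : EuclideanSpace ℝ (Fin d) → (Fin d → ℝ)) ⁻¹'
      (Set.univ.pi fun j : Fin d => Set.Icc (m j.castSucc) (M j.castSucc)))
    (hrange : ∀ u ∈ K, f u ∈ Set.Icc (m (Fin.last d)) (M (Fin.last d)))
    (hmono : ∀ u ∈ K, ∀ i : Fin d, fderiv ℝ f u (EuclideanSpace.single i 1) ≤ 0) :
    ∫ u in K, Real.sqrt (‖gradient f u‖ ^ 2 + 1) ≤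
      ∑ i : Fin (d + 1), ∏ j ∈ Finset.univ.erase i, (M j - m j) := by
  subst hK
  have hmem : ∀ y ∈ Set.Icc (fun j : Fin d => m j.castSucc) (fun j => M j.castSucc),
      WithLp.toLp 2 y ∈
        WithLp.ofLp ⁻¹' Set.univ.pi fun j => Set.Icc (m j.castSucc) (M j.castSucc) :=
    fun y hy => by rwa [Set.mem_preimage, pi_univ_Icc]
  rw [pi_univ_Icc, EuclideanSpace.setIntegral_preimage_ofLp]
  simp only [EuclideanSpace.real_norm_sq_eq, EuclideanSpace.gradient_apply,
    ← EuclideanSpace.fderiv_comp_toLp_apply_single]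
  refine (integral_sqrt_sum_sq_fderiv_add_one_le (fun j => hmM _) (hf.comp PiLp.contDiff_toLp)
    (fun y hy => hrange _ (hmem y hy)) fun y hy i => ?_).trans_eq
    (Fin.sum_prod_univ_erase_castSucc fun j => M j - m j).symm
  simpa only [EuclideanSpace.fderiv_comp_toLp_apply_single] using hmono _ (hmem y hy) i
end

section
/- Let α ∈ (0,1), ε̄ > 0, ε := (ε̄, ε̄) ∈ ℝ², and define F = (f_1, f_2) : ℝ → ℝ² by f_1(x) = |x+1| and f_2(x) = |x−1| for x ≤ 1, f_2(x) = α|x−1| for x > 1. Then the set P_{ℝ,ε} of points not −ε-dominated by any point of ℝ satisfies the inclusions { x : −1−ε̄ < x < 1+ε̄/α } ⊆ P_{ℝ,ε} ⊆ { x : −1−ε̄ ≤ x ≤ 1+ε̄/α }, i.e. P_{ℝ,ε} is, up to its two endpoints, the interval from −1−ε̄ to 1+ε̄/α. -/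
/-- For the bi-objective problem `f₁(x) = |x+1|`, `f₂(x) = |x-1|` (`x ≤ 1`),
`f₂(x) = α|x-1|` (`x > 1`) and `ε = (ε̄, ε̄)`, the set `P_{ℝ,ε}` of points not
`-ε`-dominated by any real number satisfies
`(-1-ε̄, 1+ε̄/α) ⊆ P_{ℝ,ε} ⊆ [-1-ε̄, 1+ε̄/α]`. -/
theorem stmt_14 (α : ℝ) (hα : α ∈ Set.Ioo (0 : ℝ) 1) (ε : ℝ) (hε : 0 < ε)
    (f₁ f₂ : ℝ → ℝ)
    (h₁ : ∀ x, f₁ x = |x + 1|)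
    (h₂ : ∀ x, f₂ x = if x ≤ 1 then |x - 1| else α * |x - 1|) :
    Set.Ioo (-1 - ε) (1 + ε / α) ⊆
      {x : ℝ | ¬ ∃ y : ℝ, (f₁ y + ε ≤ f₁ x ∧ f₂ y + ε ≤ f₂ x) ∧
        (f₁ y + ε, f₂ y + ε) ≠ (f₁ x, f₂ x)} ∧
    {x : ℝ | ¬ ∃ y : ℝ, (f₁ y + ε ≤ f₁ x ∧ f₂ y + ε ≤ f₂ x) ∧
        (f₁ y + ε, f₂ y + ε) ≠ (f₁ x, f₂ x)} ⊆
      Set.Icc (-1 - ε) (1 + ε / α) := by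
  obtain ⟨hα0, hα1⟩ := hα
  constructor
  · rintro x ⟨hxl, hxr⟩ ⟨y, ⟨hy1, hy2⟩, -⟩
    rw [h₁, h₁] at hy1
    rw [h₂, h₂] at hy2
    by_cases hx1 : x ≤ 1
    · rw [if_pos hx1] at hy2
      rw [abs_of_nonpos (by linarith : x - 1 ≤ 0)] at hy2
      by_cases hxm : -1 ≤ x
      · rw [abs_of_nonneg (by linarith : (0:ℝ) ≤ x + 1)] at hy1
        by_cases hy : y ≤ 1
        · rw [if_pos hy, abs_of_nonpos (by linarith : y - 1 ≤ 0)] at hy2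
          have := le_abs_self (y + 1)
          linarith
        · rw [if_neg hy, abs_of_nonneg (by linarith : (0:ℝ) ≤ y - 1)] at hy2
          have := le_abs_self (y + 1)
          push_neg at hy
          linarith
      · rw [abs_of_nonpos (by linarith : x + 1 ≤ 0)] at hy1
        have := abs_nonneg (y + 1)
        linarith
    · push_neg at hx1
      rw [if_neg (not_le.mpr hx1), abs_of_nonneg (by linarith : (0:ℝ) ≤ x - 1)] at hy2
      have hxs : α * (x - 1) < ε := by
        have : x - 1 < ε / α := by linarith
        calc α * (x - 1) < α * (ε / α) := by
              exact mul_lt_mul_of_pos_left this hα0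
          _ = ε := by field_simp
      have hfy : 0 ≤ if y ≤ 1 then |y - 1| else α * |y - 1| := by
        split_ifs
        · exact abs_nonneg _
        · exact mul_nonneg hα0.le (abs_nonneg _)
      linarith
  · intro x hx
    simp only [Set.mem_setOf_eq] at hx
    constructor
    · by_contra h
      push_neg at h
      apply hx
      refine ⟨-1, ⟨?_, ?_⟩, ?_⟩
      · rw [h₁, h₁]
        rw [show (-1:ℝ) + 1 = 0 by ring, abs_zero,
          abs_of_nonpos (by linarith : x + 1 ≤ 0)]
        linarith
      · rw [h₂, h₂, if_pos (by norm_num : (-1:ℝ) ≤ 1),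
          if_pos (by linarith : x ≤ 1),
          show (-1:ℝ) - 1 = -2 by ring,
          abs_of_nonpos (by linarith : x - 1 ≤ 0)]
        norm_num
        linarith
      · intro hp
        have h1 := congrArg Prod.fst hp
        simp only [Prod.fst] at h1
        rw [h₁, h₁, show (-1:ℝ) + 1 = 0 by ring, abs_zero,
          abs_of_nonpos (by linarith : x + 1 ≤ 0)] at h1
        linarith
    · by_contra h
      push_neg at h
      have hea : ε < ε / α := by
        rw [lt_div_iff₀ hα0]
        nlinarith
      have hx1 : 1 + ε < x := by linarith
      apply hx
      refine ⟨1, ⟨?_, ?_⟩, ?_⟩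
      · rw [h₁, h₁, show (1:ℝ) + 1 = 2 by ring,
          abs_of_nonneg (by norm_num : (0:ℝ) ≤ 2),
          abs_of_nonneg (by linarith : (0:ℝ) ≤ x + 1)]
        linarith
      · rw [h₂, h₂, if_pos le_rfl, if_neg (by linarith : ¬ x ≤ 1),
          show (1:ℝ) - 1 = 0 by ring, abs_zero,
          abs_of_nonneg (by linarith : (0:ℝ) ≤ x - 1)]
        have : ε / α < x - 1 := by linarith
        have := (div_lt_iff₀ hα0).mp this
        linarith
      · intro hp
        have h1 := congrArg Prod.snd hp
        simp only [Prod.snd] at h1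
        rw [h₂, h₂, if_pos le_rfl, if_neg (by linarith : ¬ x ≤ 1),
          show (1:ℝ) - 1 = 0 by ring, abs_zero,
          abs_of_nonneg (by linarith : (0:ℝ) ≤ x - 1)] at h1
        have : ε / α < x - 1 := by linarith
        have := (div_lt_iff₀ hα0).mp this
        linarith
end

section
/- Let α ∈ (0,1), ε̄ > 0, Δ > 0, ε := (ε̄, ε̄) ∈ ℝ², and define F = (f_1, f_2) : ℝ → ℝ² by f_1(x) = |x+1| and f_2(x) = |x−1| for x ≤ 1, f_2(x) = α|x−1| for x > 1. Then dist(F(P_{ℝ,ε+1Δ}), F(P_{ℝ,ε})) = Δ/α, where dist(B,A) := sup_{u∈B} inf_{v∈A} ‖u−v‖_∞. In particular this distance becomes arbitrarily large as α → 0 for fixed Δ. -/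
/-- Characterization of the ε-Pareto set as an interval. -/
lemma pareto_char (α : ℝ) (hα0 : 0 < α) (hα1 : α < 1)
    (F : ℝ → Fin 2 → ℝ)
    (h₁ : ∀ x, F x 0 = |x + 1|)
    (h₂ : ∀ x, F x 1 = if x ≤ 1 then |x - 1| else α * |x - 1|)
    (η : ℝ) (hη : 0 < η) :
    {x : ℝ | ¬ ∃ y : ℝ, (∀ i, F y i + η ≤ F x i) ∧ (fun i => F y i + η) ≠ F x}
      = Set.Ico (-1 - η) (1 + η / α) := by
  have hηα : η < η / α := by
    rw [lt_div_iff₀ hα0]; nlinarith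
  have hsum : ∀ y, 2 ≤ F y 0 + F y 1 := by
    intro y
    rw [h₁ y, h₂ y]
    split_ifs with h
    · have := le_abs_self (y + 1)
      have := neg_abs_le (y - 1)
      linarith
    · push_neg at h
      have h1 : |y + 1| = y + 1 := abs_of_nonneg (by linarith)
      have h2 : 0 ≤ α * |y - 1| := by positivity
      linarith
  have hnn : ∀ y, 0 ≤ F y 1 := by
    intro y; rw [h₂ y]; split_ifs <;> positivity
  ext x
  simp only [Set.mem_setOf_eq, Set.mem_Ico]
  constructor
  · intro hx
    constructor
    · by_contra h
      push_neg at h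
      refine hx ⟨-1, Fin.forall_fin_two.mpr ⟨?_, ?_⟩, ?_⟩
      · rw [h₁, h₁, abs_of_nonpos (by linarith : x + 1 ≤ 0)]
        simp only [neg_add_cancel, abs_zero]
        linarith
      · rw [h₂, h₂, if_pos (by linarith : (-1:ℝ) ≤ 1), if_pos (by linarith : x ≤ 1),
          abs_of_nonpos (by linarith : x - 1 ≤ 0)]
        norm_num
        linarith
      · intro he
        have := congrFun he 0
        simp only [h₁] at this
        rw [abs_of_nonpos (by linarith : x + 1 ≤ 0)] at this
        simp at this
        linarith
    · by_contra h
      push_neg at h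
      have hx1 : 1 < x := by
        have : 0 < η / α := by positivity
        linarith
      refine hx ⟨1, Fin.forall_fin_two.mpr ⟨?_, ?_⟩, ?_⟩
      · rw [h₁, h₁, abs_of_nonneg (by linarith : (0:ℝ) ≤ 1 + 1),
          abs_of_nonneg (by linarith : 0 ≤ x + 1)]
        linarith
      · rw [h₂, h₂, if_pos (le_refl (1:ℝ)), if_neg (not_le.2 hx1),
          abs_of_nonneg (by linarith : 0 ≤ x - 1)]
        simp only [sub_self, abs_zero]
        have h3 : η / α * α ≤ (x - 1) * α := by
          apply mul_le_mul_of_nonneg_right _ hα0.le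
          linarith
        rw [div_mul_cancel₀ _ hα0.ne'] at h3
        linarith
      · intro he
        have := congrFun he 0
        simp only [h₁] at this
        rw [abs_of_nonneg (by linarith : (0:ℝ) ≤ 1 + 1),
          abs_of_nonneg (by linarith : 0 ≤ x + 1)] at this
        norm_num at this
        linarith
  · rintro ⟨hl, hr⟩ ⟨y, hdom, hne⟩
    have d0 := hdom 0
    have d1 := hdom 1
    rcases le_or_gt x 1 with hx1 | hx1
    · rcases le_or_gt (-1) x with hxm | hxm
      · have e0 : F x 0 = x + 1 := by rw [h₁]; exact abs_of_nonneg (by linarith)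
        have e1 : F x 1 = 1 - x := by
          rw [h₂, if_pos hx1, abs_of_nonpos (by linarith : x - 1 ≤ 0)]; ring
        have := hsum y
        rw [e0] at d0; rw [e1] at d1
        linarith
      · have e0 : F x 0 = -x - 1 := by
          rw [h₁, abs_of_nonpos (by linarith : x + 1 ≤ 0)]; ring
        have e1 : F x 1 = 1 - x := by
          rw [h₂, if_pos hx1, abs_of_nonpos (by linarith : x - 1 ≤ 0)]; ring
        rw [e0] at d0; rw [e1] at d1
        have hy0 : F y 0 = 0 := by
          have h1' : 0 ≤ F y 0 := by rw [h₁]; positivity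
          linarith
        have hyv : y = -1 := by
          rw [h₁] at hy0
          have := abs_eq_zero.1 hy0
          linarith
        have hy1 : F y 1 = 2 := by
          rw [hyv, h₂, if_pos (by norm_num : (-1:ℝ) ≤ 1)]
          norm_num
        rw [hy1] at d1
        have hxe : x = -1 - η := by linarith
        apply hne
        funext i
        fin_cases i
        · show F y 0 + η = F x 0
          rw [hy0, e0, hxe]; ring
        · show F y 1 + η = F x 1
          rw [hy1, e1, hxe]; ring
    · have e1 : F x 1 = α * (x - 1) := by
        rw [h₂, if_neg (not_le.2 hx1), abs_of_nonneg (by linarith : 0 ≤ x - 1)]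
      rw [e1] at d1
      have hb : α * (x - 1) < η := by
        have h3 : x - 1 < η / α := by linarith
        have := (lt_div_iff₀ hα0).1 h3
        linarith
      have := hnn y
      linarith

/-- For the bi-objective problem `F = (|x+1|, f₂)` with `f₂(x) = |x-1|` for
`x ≤ 1` and `f₂(x) = α|x-1|` for `x > 1`, the semi-distance (sup of `∞`-norm
distances to the nearer set) between `F(P_{ℝ,ε+1Δ})` and `F(P_{ℝ,ε})` equals
`Δ/α`. -/
theorem stmt_15 (α : ℝ) (hα : α ∈ Set.Ioo (0 : ℝ) 1) (ε Δ : ℝ)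
    (hε : 0 < ε) (hΔ : 0 < Δ)
    (F : ℝ → Fin 2 → ℝ)
    (h₁ : ∀ x, F x 0 = |x + 1|)
    (h₂ : ∀ x, F x 1 = if x ≤ 1 then |x - 1| else α * |x - 1|)
    (Pe PΔ : Set ℝ)
    (hPe : Pe = {x : ℝ | ¬ ∃ y : ℝ, (∀ i, F y i + ε ≤ F x i) ∧
      (fun i => F y i + ε) ≠ F x})
    (hPΔ : PΔ = {x : ℝ | ¬ ∃ y : ℝ, (∀ i, F y i + (ε + Δ) ≤ F x i) ∧
      (fun i => F y i + (ε + Δ)) ≠ F x}) :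
    (⨆ u ∈ F '' PΔ, Metric.infDist u (F '' Pe)) = Δ / α := by
  obtain ⟨hα0, hα1⟩ := hα
  have hPe' : Pe = Set.Ico (-1 - ε) (1 + ε / α) := by
    rw [hPe]; exact pareto_char α hα0 hα1 F h₁ h₂ ε hε
  have hPΔ' : PΔ = Set.Ico (-1 - (ε + Δ)) (1 + (ε + Δ) / α) := by
    rw [hPΔ]; exact pareto_char α hα0 hα1 F h₁ h₂ (ε + Δ) (by linarith)
  have hεα : ε ≤ ε / α := by rw [le_div_iff₀ hα0]; nlinarith
  have hΔα : Δ ≤ Δ / α := by rw [le_div_iff₀ hα0]; nlinarith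
  have hDα0 : 0 < Δ / α := by positivity
  have hεα0 : 0 < ε / α := by positivity
  have hadd : (ε + Δ) / α = ε / α + Δ / α := add_div ε Δ α
  have hf2 : ∀ y : ℝ, 1 ≤ y → F y 1 = α * (y - 1) := by
    intro y hy
    rw [h₂]
    split_ifs with h
    · have : y = 1 := le_antisymm h hy
      rw [this]; simp
    · push_neg at h
      rw [abs_of_nonneg (by linarith : 0 ≤ y - 1)]
  have key : ∀ x ∈ PΔ, Metric.infDist (F x) (F '' Pe) ≤ Δ / α := by
    intro x hx
    rw [hPΔ', Set.mem_Ico] at hx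
    obtain ⟨hl, hr⟩ := hx
    by_cases hmem : x ∈ Set.Ico (-1 - ε) (1 + ε / α)
    · rw [Metric.infDist_zero_of_mem (Set.mem_image_of_mem F (hPe' ▸ hmem))]
      positivity
    · rcases lt_or_ge x (-1 - ε) with hc | hc
      · have hmemy : (-1 - ε : ℝ) ∈ Pe := by
          rw [hPe', Set.mem_Ico]
          constructor <;> linarith
        refine le_trans (Metric.infDist_le_dist_of_mem (Set.mem_image_of_mem F hmemy)) ?_
        rw [dist_pi_le_iff hDα0.le, Fin.forall_fin_two]
        constructor
        · rw [Real.dist_eq, h₁, h₁, abs_of_nonpos (by linarith : x + 1 ≤ 0),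
            abs_of_nonpos (by linarith : (-1 - ε + 1 : ℝ) ≤ 0), abs_le]
          constructor <;> linarith
        · rw [Real.dist_eq, h₂, h₂, if_pos (by linarith : x ≤ 1),
            if_pos (by linarith : (-1 - ε : ℝ) ≤ 1),
            abs_of_nonpos (by linarith : x - 1 ≤ 0),
            abs_of_nonpos (by linarith : (-1 - ε - 1 : ℝ) ≤ 0), abs_le]
          constructor <;> linarith
      · have hcx : 1 + ε / α ≤ x := by
          by_contra h
          push_neg at h
          exact hmem ⟨hc, h⟩
        set δ := min (ε / α) (Δ / α - (x - 1 - ε / α)) with hδ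
        have hδ0 : 0 < δ := by
          apply lt_min hεα0
          rw [hadd] at hr
          linarith
        have hδ1 : δ ≤ ε / α := min_le_left _ _
        have hδ2 : δ ≤ Δ / α - (x - 1 - ε / α) := min_le_right _ _
        set y := 1 + ε / α - δ with hy
        have hy1 : 1 ≤ y := by rw [hy]; linarith
        have hymem : y ∈ Pe := by
          rw [hPe', Set.mem_Ico]
          constructor
          · rw [hy]; linarith
          · rw [hy]; linarith
        refine le_trans (Metric.infDist_le_dist_of_mem (Set.mem_image_of_mem F hymem)) ?_
        rw [dist_pi_le_iff hDα0.le, Fin.forall_fin_two]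
        have hxy : 0 ≤ x - y := by rw [hy]; linarith
        have hxyΔ : x - y ≤ Δ / α := by rw [hy]; linarith
        constructor
        · rw [Real.dist_eq, h₁, h₁, abs_of_nonneg (by linarith : 0 ≤ x + 1),
            abs_of_nonneg (by linarith : 0 ≤ y + 1), abs_le]
          constructor <;> linarith
        · rw [Real.dist_eq, hf2 x (by linarith), hf2 y hy1, abs_le]
          have hh1 : 0 ≤ α * (x - y) := mul_nonneg hα0.le hxy
          have hh2 : α * (x - y) ≤ x - y := by nlinarith
          constructor <;> nlinarith
  have bound : ∀ u : Fin 2 → ℝ,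
      (⨆ _ : u ∈ F '' PΔ, Metric.infDist u (F '' Pe)) ≤ Δ / α := by
    intro u
    apply Real.iSup_le _ hDα0.le
    rintro ⟨x, hx, rfl⟩
    exact key x hx
  apply le_antisymm
  · exact Real.iSup_le bound hDα0.le
  · apply le_of_forall_lt
    intro c hc
    set d := (max c 0 + Δ / α) / 2 with hd
    have hd0 : 0 ≤ d := by
      have : (0:ℝ) ≤ max c 0 := le_max_right _ _
      rw [hd]; linarith
    have hdlt : d < Δ / α := by
      have h1 : max c 0 < Δ / α := max_lt hc hDα0
      rw [hd]; linarith
    have hcd : c < d := by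
      have : c ≤ max c 0 := le_max_left _ _
      rw [hd]; linarith
    set x := 1 + ε / α + d with hxdef
    have hxPΔ : x ∈ PΔ := by
      rw [hPΔ', Set.mem_Ico, hadd, hxdef]
      constructor <;> linarith
    have hPene : (F '' Pe).Nonempty := by
      refine ⟨F 1, Set.mem_image_of_mem F ?_⟩
      rw [hPe', Set.mem_Ico]
      constructor <;> linarith
    have hinf : d ≤ Metric.infDist (F x) (F '' Pe) := by
      apply le_of_not_gt
      intro hlt
      obtain ⟨u, hu, hdu⟩ := (Metric.infDist_lt_iff hPene).1 hlt
      obtain ⟨y, hy, rfl⟩ := hu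
      rw [hPe', Set.mem_Ico] at hy
      obtain ⟨hy1, hy2⟩ := hy
      have hcoord := dist_le_pi_dist (F x) (F y) 0
      rw [Real.dist_eq, h₁, h₁,
        abs_of_nonneg (by rw [hxdef]; linarith : 0 ≤ x + 1)] at hcoord
      have haby : |y + 1| ≤ 2 + ε / α := by
        rw [abs_le]; constructor <;> linarith
      have h1 : d ≤ x + 1 - |y + 1| := by rw [hxdef]; linarith
      have h2 := le_abs_self (x + 1 - |y + 1|)
      linarith
    have hle : Metric.infDist (F x) (F '' Pe) ≤
        ⨆ u ∈ F '' PΔ, Metric.infDist u (F '' Pe) := by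
      have heq : (⨆ _ : F x ∈ F '' PΔ, Metric.infDist (F x) (F '' Pe))
          = Metric.infDist (F x) (F '' Pe) := ciSup_pos (Set.mem_image_of_mem F hxPΔ)
      rw [← heq]
      exact le_ciSup (f := fun u => ⨆ _ : u ∈ F '' PΔ, Metric.infDist u (F '' Pe))
        ⟨Δ / α, by rintro r ⟨u, rfl⟩; exact bound u⟩ (F x)
    linarith
end

section
/- Let F : ℝ^n → ℝ^k, ε ∈ ℝ^k with positive entries, and 0 < Δ* < Δ. Consider the archive update ArchiveUpdateP_{Q,ε} which, starting from a finite archive A₀ ⊆ ℝ^n and processing the points p of a finite list P one by one, (i) inserts p into the current archive A iff there is no a₁ ∈ A with a₁ ≺_{−ε} p and no a₂ ∈ A with ‖F(a₂) − F(p)‖_∞ ≤ Δ*, and (ii) upon inserting p removes every a ∈ A with p ≺_{−(ε+1Δ)} a. If the initial archive A₀ satisfies ‖F(a₁) − F(a₂)‖_∞ ≥ Δ* for all distinct a₁, a₂ ∈ A₀, then the output archive A satisfies ‖F(a₁) − F(a₂)‖_∞ ≥ Δ* for all distinct a₁, a₂ ∈ A. -/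
open Classical in
/-- One step of `ArchiveUpdateP_{Q,ε}`: the candidate `p` is inserted iff no
archive member `-ε`-dominates it and no archive member has image within
`∞`-distance `Δ*` of `F p`; upon insertion, every archive member that is
`-(ε+1Δ)`-dominated by `p` is removed. -/
noncomputable def archiveStep {n k : ℕ} (F : (Fin n → ℝ) → Fin k → ℝ)
    (ε : Fin k → ℝ) (Δ Δs : ℝ) (A : Finset (Fin n → ℝ)) (p : Fin n → ℝ) :
    Finset (Fin n → ℝ) :=
  if (¬ ∃ a₁ ∈ A, (∀ i, F a₁ i + ε i ≤ F p i) ∧ (fun i => F a₁ i + ε i) ≠ F p) ∧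
      (¬ ∃ a₂ ∈ A, ‖F a₂ - F p‖ ≤ Δs) then
    insert p (A.filter fun a =>
      ¬ ((∀ i, F p i + (ε i + Δ) ≤ F a i) ∧ (fun i => F p i + (ε i + Δ)) ≠ F a))
  else A

/-- `ArchiveUpdateP_{Q,ε}(P, A₀, Δ)`: fold of `archiveStep` over the list `P`
of candidate points, starting from the archive `A₀`. -/
noncomputable def archiveUpdate {n k : ℕ} (F : (Fin n → ℝ) → Fin k → ℝ)
    (ε : Fin k → ℝ) (Δ Δs : ℝ) (P : List (Fin n → ℝ))
    (A₀ : Finset (Fin n → ℝ)) : Finset (Fin n → ℝ) :=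
  P.foldl (archiveStep F ε Δ Δs) A₀


lemma archiveStep_sep {n k : ℕ} (F : (Fin n → ℝ) → Fin k → ℝ) (ε : Fin k → ℝ)
    (Δ Δs : ℝ) (A : Finset (Fin n → ℝ)) (p : Fin n → ℝ)
    (hA : ∀ a₁ ∈ A, ∀ a₂ ∈ A, a₁ ≠ a₂ → Δs ≤ ‖F a₁ - F a₂‖) :
    ∀ a₁ ∈ archiveStep F ε Δ Δs A p, ∀ a₂ ∈ archiveStep F ε Δ Δs A p,
      a₁ ≠ a₂ → Δs ≤ ‖F a₁ - F a₂‖ := by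
  unfold archiveStep
  split
  case isTrue h =>
    intro a₁ h1 a₂ h2 hne
    rw [Finset.mem_insert, Finset.mem_filter] at h1 h2
    have key : ∀ a ∈ A, Δs ≤ ‖F a - F p‖ := by
      intro a ha
      by_contra hlt
      exact h.2 ⟨a, ha, le_of_not_gt (fun hh => hlt hh.le)⟩
    rcases h1 with rfl | h1
    · rcases h2 with rfl | h2
      · exact absurd rfl hne
      · have := key a₂ h2.1
        rwa [← norm_neg, neg_sub] at this
    · rcases h2 with rfl | h2
      · exact key a₁ h1.1
      · exact hA a₁ h1.1 a₂ h2.1 hne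
  case isFalse => exact hA

/-- If the initial archive is `Δ*`-separated in image space, then so is the
archive produced by `ArchiveUpdateP_{Q,ε}`. -/
theorem stmt_16 {n k : ℕ} (F : (Fin n → ℝ) → Fin k → ℝ) (ε : Fin k → ℝ)
    (hε : ∀ i, 0 < ε i) (Δ Δs : ℝ) (hΔs : 0 < Δs) (hΔ : Δs < Δ)
    (P : List (Fin n → ℝ)) (A₀ : Finset (Fin n → ℝ))
    (hA₀ : ∀ a₁ ∈ A₀, ∀ a₂ ∈ A₀, a₁ ≠ a₂ → Δs ≤ ‖F a₁ - F a₂‖) :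
    ∀ a₁ ∈ archiveUpdate F ε Δ Δs P A₀, ∀ a₂ ∈ archiveUpdate F ε Δ Δs P A₀,
      a₁ ≠ a₂ → Δs ≤ ‖F a₁ - F a₂‖ := by
  induction P generalizing A₀ with
  | nil => exact hA₀
  | cons p P ih =>
      exact ih (archiveStep F ε Δ Δs A₀ p) (archiveStep_sep F ε Δ Δs A₀ p hA₀)
end

section
/- Let F : ℝ^n → ℝ^k, ε ∈ ℝ^k with positive entries, and 0 < Δ* < Δ. Consider the archive update ArchiveUpdateP_{Q,ε} which, starting from a finite archive A₀ ⊆ ℝ^n and processing the points p of a finite list P one by one, (i) inserts p into the current archive A iff there is no a₁ ∈ A with a₁ ≺_{−ε} p and no a₂ ∈ A with ‖F(a₂) − F(p)‖_∞ ≤ Δ*, and (ii) upon inserting p removes every a ∈ A with p ≺_{−(ε+1Δ)} a. Then the output archive A := ArchiveUpdateP_{Q,ε}(P, A₀, Δ) satisfies: for every x ∈ P ∪ A₀ there exists a ∈ A with F(a)_i ≤ F(x)_i + ε_i + Δ for all i = 1,…,k. -/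
section Aux

variable {n k : ℕ} (F : (Fin n → ℝ) → Fin k → ℝ) (ε : Fin k → ℝ)

lemma archiveStep_preserve (hε : ∀ i, 0 < ε i) {Δ Δs : ℝ} (hΔ0 : 0 ≤ Δ)
    (A : Finset (Fin n → ℝ)) (p x : Fin n → ℝ)
    (h : ∃ a ∈ A, ∀ i, F a i ≤ F x i + ε i + Δ) :
    ∃ a ∈ archiveStep F ε Δ Δs A p, ∀ i, F a i ≤ F x i + ε i + Δ := by
  obtain ⟨a, haA, ha⟩ := h
  unfold archiveStep
  split
  · by_cases hrem : ((∀ i, F p i + (ε i + Δ) ≤ F a i) ∧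
        (fun i => F p i + (ε i + Δ)) ≠ F a)
    · refine ⟨p, Finset.mem_insert_self _ _, fun i => ?_⟩
      have := hrem.1 i
      have h2 := ha i
      have hεi := (hε i).le
      linarith
    · exact ⟨a, Finset.mem_insert_of_mem (Finset.mem_filter.2 ⟨haA, hrem⟩), ha⟩
  · exact ⟨a, haA, ha⟩

lemma archiveStep_self (hε : ∀ i, 0 < ε i) {Δ Δs : ℝ} (hΔs : 0 < Δs) (hΔ : Δs < Δ)
    (A : Finset (Fin n → ℝ)) (p : Fin n → ℝ) :
    ∃ a ∈ archiveStep F ε Δ Δs A p, ∀ i, F a i ≤ F p i + ε i + Δ := by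
  unfold archiveStep
  split
  · refine ⟨p, Finset.mem_insert_self _ _, fun i => ?_⟩
    have := (hε i).le; linarith
  · rename_i hcond
    rw [not_and_or, not_not, not_not] at hcond
    rcases hcond with ⟨a₁, ha₁A, hdom, _⟩ | ⟨a₂, ha₂A, hnorm⟩
    · refine ⟨a₁, ha₁A, fun i => ?_⟩
      have := hdom i
      have hΔ0 : (0:ℝ) < Δ := hΔs.trans hΔ
      have := (hε i).le
      linarith
    · refine ⟨a₂, ha₂A, fun i => ?_⟩
      have h1 : |(F a₂ - F p) i| ≤ ‖F a₂ - F p‖ := by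
        simpa [Real.norm_eq_abs] using norm_le_pi_norm (F a₂ - F p) i
      have h2 : F a₂ i - F p i ≤ Δs := by
        have := (abs_le.mp h1).2
        simpa [Pi.sub_apply] using this.trans hnorm
      have := (hε i).le
      linarith

lemma fold_preserve (hε : ∀ i, 0 < ε i) {Δ Δs : ℝ} (hΔ0 : 0 ≤ Δ)
    (P : List (Fin n → ℝ)) (A : Finset (Fin n → ℝ)) (x : Fin n → ℝ)
    (h : ∃ a ∈ A, ∀ i, F a i ≤ F x i + ε i + Δ) :
    ∃ a ∈ archiveUpdate F ε Δ Δs P A, ∀ i, F a i ≤ F x i + ε i + Δ := by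
  induction P generalizing A with
  | nil => exact h
  | cons q Q ihQ =>
    exact ihQ _ (archiveStep_preserve F ε hε hΔ0 _ q x h)

end Aux

/-- Every processed point `x ∈ P ∪ A₀` is `(ε + 1Δ)`-covered by some member of
the output archive: there is `a` in the output with `F a ≤ F x + ε + 1Δ`
componentwise. -/
theorem stmt_17 {n k : ℕ} (F : (Fin n → ℝ) → Fin k → ℝ) (ε : Fin k → ℝ)
    (hε : ∀ i, 0 < ε i) (Δ Δs : ℝ) (hΔs : 0 < Δs) (hΔ : Δs < Δ)
    (P : List (Fin n → ℝ)) (A₀ : Finset (Fin n → ℝ)) :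
    ∀ x, (x ∈ P ∨ x ∈ A₀) →
      ∃ a ∈ archiveUpdate F ε Δ Δs P A₀, ∀ i, F a i ≤ F x i + ε i + Δ := by
  have hΔ0 : (0:ℝ) ≤ Δ := (hΔs.trans hΔ).le
  induction P generalizing A₀ with
  | nil =>
    intro x hx
    rcases hx with h | h
    · simp at h
    · exact ⟨x, h, fun i => by have := (hε i).le; linarith⟩
  | cons p P ih =>
    intro x hx
    have hfold : archiveUpdate F ε Δ Δs (p :: P) A₀ =
        archiveUpdate F ε Δ Δs P (archiveStep F ε Δ Δs A₀ p) := rfl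
    rw [hfold]
    rcases hx with h | h
    · rcases List.mem_cons.mp h with rfl | hmem
      · exact fold_preserve F ε hε hΔ0 P _ x (archiveStep_self F ε hε hΔs hΔ A₀ x)
      · exact ih (archiveStep F ε Δ Δs A₀ p) x (Or.inl hmem)
    · refine fold_preserve F ε hε hΔ0 P _ x
        (archiveStep_preserve F ε hε hΔ0 A₀ p x
          ⟨x, h, fun i => by have := (hε i).le; linarith⟩)
end
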